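/- Let p ∈ ℕ and a > 0. Then for every ω ∈ ℝ, the Fourier cosine transform of τ^p e^{−aτ} is given by ∫₀^∞ τ^p e^{−aτ} cos(ωτ) dτ = p! · (a² + ω²)^{−(p+1)} · Σ_{m=0}^{⌊(p+1)/2⌋} (−1)^m C(p+1, 2m) a^{p+1−2m} ω^{2m}, where C(n, k) is the binomial coefficient. -/

import Mathlib

/-!
Writing `c = a - iω`, the integrand is the real part of `τ^p e^{-cτ}`, and integrating by parts
`p` times gives the complex Laplace transform `∫₀^∞ τ^p e^{-cτ} dτ = p! / c^{p+1}`. Since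
`c⁻¹ = (a + iω) / (a² + ω²)`, the claimed sum is the binomial expansion of
`Re (a + iω)^{p+1}`, where only the even powers of `iω` contribute.
-/

open MeasureTheory Real

open Complex Filter Finset Set Topology

section LaplacePow

variable {c : ℂ}

lemma integrableOn_pow_mul_cexp_neg_mul_Ioi (hc : 0 < c.re) (n : ℕ) :
    IntegrableOn (fun t : ℝ => (t : ℂ) ^ n * cexp (-c * t)) (Ioi 0) := by
  have hreal : IntegrableOn (fun t : ℝ => t ^ (n : ℝ) * rexp (-c.re * t ^ (1 : ℝ))) (Ioi 0) :=
    integrableOn_rpow_mul_exp_neg_mul_rpow (by linarith [n.cast_nonneg (α := ℝ)]) one_pos hc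
  refine (integrable_norm_iff (by fun_prop)).mp
    (hreal.congr_fun (fun t ht => ?_) measurableSet_Ioi)
  simp [norm_exp, abs_of_pos (mem_Ioi.mp ht)]

lemma tendsto_pow_mul_cexp_neg_mul_atTop (hc : 0 < c.re) (n : ℕ) :
    Tendsto (fun t : ℝ => (t : ℂ) ^ n * cexp (-c * t)) atTop (𝓝 0) := by
  refine tendsto_zero_iff_norm_tendsto_zero.mpr
    ((tendsto_rpow_mul_exp_neg_mul_atTop_nhds_zero n c.re hc).congr' ?_)
  filter_upwards [eventually_gt_atTop 0] with t ht
  simp [norm_exp, abs_of_pos ht]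

lemma integral_pow_succ_mul_cexp_neg_mul_Ioi (hc : 0 < c.re) (n : ℕ) :
    ∫ t in Ioi (0 : ℝ), (t : ℂ) ^ (n + 1) * cexp (-c * t)
      = (n + 1) / c * ∫ t in Ioi (0 : ℝ), (t : ℂ) ^ n * cexp (-c * t) := by
  have hc0 : c ≠ 0 := fun h => by simp [h] at hc
  have hu (t : ℝ) :
      HasDerivAt (fun t : ℝ => (t : ℂ) ^ (n + 1)) ((n + 1) * (t : ℂ) ^ n) t := by
    simpa using (hasDerivAt_pow (n + 1) (t : ℂ)).comp_ofReal
  have hv (t : ℝ) : HasDerivAt (fun t : ℝ => -c⁻¹ * cexp (-c * t)) (cexp (-c * t)) t :=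
    (((hasDerivAt_id (t : ℂ)).const_mul (-c)).cexp.const_mul (-c⁻¹)).comp_ofReal.congr_deriv
      (by simp only [id]; field_simp)
  have hparts := integral_Ioi_mul_deriv_eq_deriv_mul (a' := 0) (b' := 0)
    (fun t _ => hu t) (fun t _ => hv t)
    (integrableOn_pow_mul_cexp_neg_mul_Ioi hc (n + 1))
    (IntegrableOn.congr_fun ((integrableOn_pow_mul_cexp_neg_mul_Ioi hc n).const_mul (-(n + 1) / c))
      (fun t _ => by simp only [Pi.mul_apply]; ring) measurableSet_Ioi)
    ?_ ?_
  · rw [hparts, zero_sub_zero, zero_sub, ← integral_neg, ← integral_const_mul]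
    congr 1 with t
    ring
  · refine (Continuous.tendsto' (by fun_prop) 0 0 ?_).mono_left nhdsWithin_le_nhds
    simp
  · simpa [Pi.mul_def, mul_left_comm] using
      (tendsto_pow_mul_cexp_neg_mul_atTop hc (n + 1)).const_mul (-c⁻¹)

lemma integral_pow_mul_cexp_neg_mul_Ioi (hc : 0 < c.re) (n : ℕ) :
    ∫ t in Ioi (0 : ℝ), (t : ℂ) ^ n * cexp (-c * t) = n.factorial / c ^ (n + 1) := by
  have hc0 : c ≠ 0 := fun h => by simp [h] at hc
  induction n with
  | zero =>
    simpa [div_neg, neg_div, one_div] using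
      integral_exp_mul_complex_Ioi (a := -c) (by simpa using hc) 0
  | succ n ih =>
    rw [integral_pow_succ_mul_cexp_neg_mul_Ioi hc, ih, Nat.factorial_succ]
    push_cast
    field_simp
    ring

end LaplacePow

lemma re_I_pow (k : ℕ) : (I ^ k).re = if Even k then (-1) ^ (k / 2) else 0 := by
  obtain ⟨m, rfl | rfl⟩ := Nat.even_or_odd' k
  all_goals have hI : I ^ (2 * m) = ((-1 : ℝ) ^ m : ℝ) := by push_cast; rw [pow_mul, I_sq]
  · rw [if_pos (even_two_mul m), hI, ofReal_re, Nat.mul_div_cancel_left m two_pos]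
  · rw [if_neg (Nat.not_even_two_mul_add_one m), pow_succ, hI, re_ofReal_mul, I_re, mul_zero]

lemma re_ofReal_add_ofReal_mul_I_pow (x y : ℝ) (n : ℕ) :
    (((x : ℂ) + y * I) ^ n).re
      = ∑ m ∈ range (n / 2 + 1),
          (-1) ^ m * (n.choose (2 * m) : ℝ) * x ^ (n - 2 * m) * y ^ (2 * m) := by
  have hterm (k : ℕ) : (((y : ℂ) * I) ^ k * (x : ℂ) ^ (n - k) * (n.choose k : ℂ)).re
      = (y ^ k * x ^ (n - k) * n.choose k) * (I ^ k).re := by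
    rw [← re_ofReal_mul]
    push_cast
    ring_nf
  have heven : (range (n + 1)).filter Even = (range (n / 2 + 1)).image (2 * ·) := by
    ext k
    simp only [Finset.mem_filter, Finset.mem_range, Finset.mem_image]
    constructor
    · rintro ⟨hk, m, rfl⟩
      exact ⟨m, by omega, by ring⟩
    · rintro ⟨m, hm, rfl⟩
      exact ⟨by omega, even_two_mul m⟩
  rw [add_comm, add_pow, re_sum]
  simp only [hterm, re_I_pow, mul_ite, mul_zero]
  rw [← sum_filter, heven, sum_image (fun _ _ _ _ h => by simpa using h)]
  refine sum_congr rfl fun m _ => ?_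
  rw [Nat.mul_div_cancel_left m two_pos]
  ring

lemma re_ofReal_pow_mul_cexp_neg_mul (c : ℂ) (n : ℕ) (t : ℝ) :
    ((t : ℂ) ^ n * cexp (-c * t)).re = t ^ n * rexp (-c.re * t) * Real.cos (c.im * t) := by
  rw [← ofReal_pow, re_ofReal_mul, exp_re, mul_assoc]
  simp

/-- The Fourier cosine transform of `τ^p e^{−aτ}`:
`∫₀^∞ τ^p e^{−aτ} cos(ωτ) dτ
  = p! (a² + ω²)^{−(p+1)} Σ_{m=0}^{⌊(p+1)/2⌋} (−1)^m C(p+1, 2m) a^{p+1−2m} ω^{2m}`. -/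
theorem fourier_cosine_canonical_filter (p : ℕ) (a : ℝ) (ha : 0 < a) (ω : ℝ) :
    ∫ τ in Set.Ioi (0 : ℝ), τ ^ p * Real.exp (-a * τ) * Real.cos (ω * τ)
      = (p.factorial : ℝ) * ((a ^ 2 + ω ^ 2) ^ (p + 1))⁻¹ *
          ∑ m ∈ Finset.range ((p + 1) / 2 + 1),
            (-1 : ℝ) ^ m * ((p + 1).choose (2 * m) : ℝ) *
              a ^ (p + 1 - 2 * m) * ω ^ (2 * m) := by
  set c : ℂ := a - ω * I
  have hc : 0 < c.re := by simpa [c]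
  have hinv : c⁻¹ = ((a ^ 2 + ω ^ 2)⁻¹ : ℝ) * (a + ω * I) := by
    rw [inv_def, mul_comm]
    simp [c, normSq_apply, sq]
  calc ∫ τ in Ioi (0 : ℝ), τ ^ p * Real.exp (-a * τ) * Real.cos (ω * τ)
      = ∫ τ in Ioi (0 : ℝ), ((τ : ℂ) ^ p * cexp (-c * τ)).re := by
        congr 1 with τ
        rw [re_ofReal_pow_mul_cexp_neg_mul]
        simp [c]
    _ = ((p.factorial : ℂ) / c ^ (p + 1)).re := by
        rw [← integral_pow_mul_cexp_neg_mul_Ioi hc]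
        exact integral_re (integrableOn_pow_mul_cexp_neg_mul_Ioi hc p)
    _ = _ := by
        rw [div_eq_mul_inv, ← inv_pow, hinv, mul_pow, ← mul_assoc, ← ofReal_pow,
          ← ofReal_natCast, ← ofReal_mul, re_ofReal_mul, re_ofReal_add_ofReal_mul_I_pow,
          inv_pow]
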